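/- arXiv:2403.20007 — 3 statements merged into one kernel-verified Lean document; each statement's English description precedes it below -/
import Mathlib

section
/- The discrete optimization problem min over s ∈ {0,1}^p with Σ_j s_j ≤ k of -‖X_{[s]}^⊤y‖ and the continuous relaxation min over t ∈ [0,1]^p with Σ_j t_j ≤ k of -‖X_t^⊤y‖² have identical optimal solutions: there is an optimal solution of the relaxation that is a binary vector, and every binary optimizer of the discrete problem is an optimizer of the relaxation. -/
open Matrix BigOperators

lemma key_sel {p k : ℕ} (hk1 : 1 ≤ k) (hkp : k ≤ p) (w : Fin p → ℝ) (hw : ∀ j, 0 ≤ w j) :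
    ∃ A : Finset (Fin p), A.card = k ∧
      ∀ t : Fin p → ℝ, (∀ j, 0 ≤ t j) → (∀ j, t j ≤ 1) → (∑ j, t j) ≤ (k : ℝ) →
        ∑ j, t j * w j ≤ ∑ j ∈ A, w j := by
  have hS : (Finset.univ.powersetCard k (α := Fin p)).Nonempty := by
    apply Finset.powersetCard_nonempty.mpr
    simpa using hkp
  obtain ⟨A, hAS, hAmax⟩ := Finset.exists_max_image _ (fun B => ∑ j ∈ B, w j) hS
  have hAcard : A.card = k := (Finset.mem_powersetCard.mp hAS).2
  refine ⟨A, hAcard, ?_⟩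
  have hAne : A.Nonempty := Finset.card_pos.mp (by omega)
  obtain ⟨j₀, hj₀A, hj₀min⟩ := Finset.exists_min_image A w hAne
  have hout : ∀ j, j ∉ A → w j ≤ w j₀ := by
    intro j hj
    have hj' : j ∉ A.erase j₀ := fun h => hj (Finset.mem_of_mem_erase h)
    have hcard : (insert j (A.erase j₀)).card = k := by
      rw [Finset.card_insert_of_notMem hj', Finset.card_erase_of_mem hj₀A]
      omega
    have hmem : insert j (A.erase j₀) ∈ Finset.univ.powersetCard k := by
      rw [Finset.mem_powersetCard]; exact ⟨Finset.subset_univ _, hcard⟩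
    have := hAmax _ hmem
    rw [Finset.sum_insert hj'] at this
    have h2 := Finset.add_sum_erase A w hj₀A
    linarith
  intro t ht0 ht1 htk
  have hsplit : ∑ j, t j * w j = ∑ j ∈ A, t j * w j + ∑ j ∈ Aᶜ, t j * w j :=
    (Finset.sum_add_sum_compl A _).symm
  have h1 : ∑ j ∈ Aᶜ, t j * w j ≤ (∑ j ∈ Aᶜ, t j) * w j₀ := by
    rw [Finset.sum_mul]
    exact Finset.sum_le_sum fun j hj =>
      mul_le_mul_of_nonneg_left (hout j (by simpa using hj)) (ht0 j)
  have h3 : (∑ j ∈ A, (1 - t j)) * w j₀ = ∑ j ∈ A, (1 - t j) * w j₀ :=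
    Finset.sum_mul _ _ _
  have h2 : (∑ j ∈ Aᶜ, t j) * w j₀ ≤ ∑ j ∈ A, (1 - t j) * w j₀ := by
    rw [← h3]
    apply mul_le_mul_of_nonneg_right _ (hw j₀)
    have hc := Finset.sum_add_sum_compl A t
    have hs : ∑ j ∈ A, (1 - t j) = (k : ℝ) - ∑ j ∈ A, t j := by
      rw [Finset.sum_sub_distrib]; simp [hAcard]
    linarith
  have h4 : ∑ j ∈ A, t j * w j + ∑ j ∈ A, (1 - t j) * w j₀ ≤ ∑ j ∈ A, w j := by
    rw [← Finset.sum_add_distrib]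
    apply Finset.sum_le_sum
    intro j hj
    nlinarith [hj₀min j hj, ht1 j, ht0 j, hw j]
  linarith

/-- Theorem 3.1(i): the discrete best-subset problem and its Boolean relaxation have
identical optimal solutions: some binary feasible point is optimal for the relaxation,
and every optimizer of the discrete problem is an optimizer of the relaxation. -/
theorem stmt3 {n p : ℕ} (k : ℕ) (hk1 : 1 ≤ k) (hkp : k ≤ p)
    (X : Matrix (Fin n) (Fin p) ℝ) (y : Fin n → ℝ)
    (z : Fin p → ℝ) (hz : z = Xᵀ *ᵥ y) :
    (∃ s : Fin p → ℝ, (∀ j, s j = 0 ∨ s j = 1) ∧ (∑ j, s j) ≤ k ∧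
        ∀ t : Fin p → ℝ, t ∈ Set.Icc (0 : Fin p → ℝ) 1 → (∑ j, t j) ≤ k →
          -(∑ j, s j ^ 2 * z j ^ 2) ≤ -(∑ j, t j ^ 2 * z j ^ 2)) ∧
    (∀ s : Fin p → ℝ, (∀ j, s j = 0 ∨ s j = 1) → (∑ j, s j) ≤ k →
      (∀ s' : Fin p → ℝ, (∀ j, s' j = 0 ∨ s' j = 1) → (∑ j, s' j) ≤ k →
        -Real.sqrt (∑ j, s j ^ 2 * z j ^ 2) ≤ -Real.sqrt (∑ j, s' j ^ 2 * z j ^ 2)) →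
      ∀ t : Fin p → ℝ, t ∈ Set.Icc (0 : Fin p → ℝ) 1 → (∑ j, t j) ≤ k →
        -(∑ j, s j ^ 2 * z j ^ 2) ≤ -(∑ j, t j ^ 2 * z j ^ 2)) := by
  obtain ⟨A, hAcard, hA⟩ := key_sel hk1 hkp (fun j => z j ^ 2) (fun j => sq_nonneg _)
  set s₀ : Fin p → ℝ := fun j => if j ∈ A then 1 else 0 with hs₀def
  have hs₀bin : ∀ j, s₀ j = 0 ∨ s₀ j = 1 := by
    intro j; by_cases h : j ∈ A <;> simp [hs₀def, h]
  have hs₀sum : (∑ j, s₀ j) = (k : ℝ) := by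
    simp [hs₀def, Finset.sum_ite_mem, hAcard]
  have hs₀val : (∑ j, s₀ j ^ 2 * z j ^ 2) = ∑ j ∈ A, z j ^ 2 := by
    have : ∀ j, s₀ j ^ 2 * z j ^ 2 = if j ∈ A then z j ^ 2 else 0 := by
      intro j; by_cases h : j ∈ A <;> simp [hs₀def, h]
    rw [Finset.sum_congr rfl fun j _ => this j, Finset.sum_ite_mem, Finset.univ_inter]
  have hopt : ∀ t : Fin p → ℝ, t ∈ Set.Icc (0 : Fin p → ℝ) 1 → (∑ j, t j) ≤ k →
      -(∑ j, s₀ j ^ 2 * z j ^ 2) ≤ -(∑ j, t j ^ 2 * z j ^ 2) := by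
    intro t ht htk
    obtain ⟨ht0, ht1⟩ := ht
    have h1 : (∑ j, t j ^ 2 * z j ^ 2) ≤ ∑ j, t j * z j ^ 2 := by
      apply Finset.sum_le_sum
      intro j _
      have h0 := ht0 j
      have h1 := ht1 j
      simp only [Pi.zero_apply, Pi.one_apply] at h0 h1
      have h2 : t j ^ 2 ≤ t j := by nlinarith
      exact mul_le_mul_of_nonneg_right h2 (sq_nonneg _)
    have h2 := hA t (fun j => ht0 j) (fun j => ht1 j) htk
    rw [hs₀val]
    linarith
  refine ⟨⟨s₀, hs₀bin, hs₀sum.le, hopt⟩, ?_⟩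
  intro s hsbin hsk hsopt t ht htk
  have h1 := hsopt s₀ hs₀bin hs₀sum.le
  have h2 : (∑ j, s₀ j ^ 2 * z j ^ 2) ≤ ∑ j, s j ^ 2 * z j ^ 2 := by
    have hnn : (0:ℝ) ≤ ∑ j, s₀ j ^ 2 * z j ^ 2 :=
      Finset.sum_nonneg fun j _ => mul_nonneg (sq_nonneg _) (sq_nonneg _)
    have h1' : Real.sqrt (∑ j, s₀ j ^ 2 * z j ^ 2) ≤ Real.sqrt (∑ j, s j ^ 2 * z j ^ 2) := by
      linarith
    have hnn' : (0:ℝ) ≤ ∑ j, s j ^ 2 * z j ^ 2 :=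
      Finset.sum_nonneg fun j _ => mul_nonneg (sq_nonneg _) (sq_nonneg _)
    nlinarith [Real.sq_sqrt hnn, Real.sq_sqrt hnn', Real.sqrt_nonneg (∑ j, s₀ j ^ 2 * z j ^ 2), Real.sqrt_nonneg (∑ j, s j ^ 2 * z j ^ 2)]
  have := hopt t ht htk
  linarith
end

section
/- For every k = 1, …, p there exists λ ≥ 0 such that an optimal solution of the constrained problem min_{t∈[0,1]^p, Σt_j ≤ k} −Σ_j t_j² z_j² is also an optimal solution of the penalized problem min_{t∈[0,1]^p} [−Σ_j t_j² z_j² + λ Σ_j t_j]. -/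
open BigOperators

/-- Theorem 3.1(ii): for every `k` there exists `λ ≥ 0` such that an optimal solution
of the size-`k` constrained relaxation is also optimal for the `λ`-penalized problem. -/
theorem stmt4 {p : ℕ} (z : Fin p → ℝ) (k : ℕ) (hk1 : 1 ≤ k) (hkp : k ≤ p) :
    ∃ lam : ℝ, 0 ≤ lam ∧ ∃ t0 : Fin p → ℝ,
      t0 ∈ Set.Icc (0 : Fin p → ℝ) 1 ∧ (∑ j, t0 j) ≤ k ∧
      (∀ t ∈ Set.Icc (0 : Fin p → ℝ) 1, (∑ j, t j) ≤ k →
        -(∑ j, t0 j ^ 2 * z j ^ 2) ≤ -(∑ j, t j ^ 2 * z j ^ 2)) ∧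
      (∀ t ∈ Set.Icc (0 : Fin p → ℝ) 1,
        -(∑ j, t0 j ^ 2 * z j ^ 2) + lam * (∑ j, t0 j) ≤
          -(∑ j, t j ^ 2 * z j ^ 2) + lam * (∑ j, t j)) := by
  classical
  have hmono : Monotone ((fun j => z j ^ 2) ∘ (Tuple.sort (fun j => z j ^ 2))) :=
    Tuple.monotone_sort _
  set σ := Tuple.sort (fun j => z j ^ 2) with hσ
  have hpk : p - k < p := by omega
  set m : Fin p := ⟨p - k, hpk⟩ with hm
  set lam := z (σ m) ^ 2 with hlam
  set S : Finset (Fin p) := (Finset.Ici m).image σ with hS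
  have hcard : S.card = k := by
    rw [hS, Finset.card_image_of_injective _ σ.injective, Fin.card_Ici]
    simp only [hm]
    omega
  have hmemS : ∀ j, j ∈ S ↔ m ≤ σ.symm j := by
    intro j
    simp only [hS, Finset.mem_image, Finset.mem_Ici]
    constructor
    · rintro ⟨i, hi, rfl⟩; simpa using hi
    · intro h; exact ⟨σ.symm j, h, by simp⟩
  have hge : ∀ j ∈ S, lam ≤ z j ^ 2 := by
    intro j hj
    have h := hmono ((hmemS j).1 hj)
    simpa using h
  have hle : ∀ j ∉ S, z j ^ 2 ≤ lam := by
    intro j hj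
    have h : σ.symm j ≤ m := le_of_not_ge (fun h' => hj ((hmemS j).2 h'))
    have h2 := hmono h
    simpa using h2
  have hlam0 : 0 ≤ lam := sq_nonneg _
  set t0 : Fin p → ℝ := fun j => if j ∈ S then (1:ℝ) else 0 with ht0def
  have key : (∑ j, t0 j ^ 2 * z j ^ 2) = ∑ j ∈ S, z j ^ 2 := by
    rw [← Finset.univ_inter S, ← Finset.sum_ite_mem]
    exact Finset.sum_congr rfl (fun j _ => by by_cases h : j ∈ S <;> simp [ht0def, h])
  have keyt : (∑ j, t0 j) = (k : ℝ) := by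
    have : (∑ j, t0 j) = ∑ j, if j ∈ S then (1:ℝ) else 0 := rfl
    rw [this, Finset.sum_ite_mem, Finset.univ_inter, Finset.sum_const, nsmul_eq_mul,
      mul_one, hcard]
  refine ⟨lam, hlam0, t0, ?_, ?_, ?_, ?_⟩
  · constructor
    · intro j; by_cases h : j ∈ S <;> simp [ht0def, h]
    · intro j; by_cases h : j ∈ S <;> simp [ht0def, h]
  · rw [keyt]
  · -- constrained optimality
    intro t ht htk
    obtain ⟨ht0, ht1⟩ := ht
    have ht0' : ∀ j, 0 ≤ t j := fun j => ht0 j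
    have ht1' : ∀ j, t j ≤ 1 := fun j => ht1 j
    rw [key]
    have step1 : (∑ j, t j ^ 2 * z j ^ 2) ≤ ∑ j, t j * z j ^ 2 := by
      apply Finset.sum_le_sum
      intro j _
      have h0 := ht0' j; have h1 := ht1' j; have hq := sq_nonneg (z j)
      nlinarith [mul_nonneg (mul_nonneg h0 (sub_nonneg.2 h1)) hq]
    have step2 : (∑ j, t j * z j ^ 2)
        ≤ (∑ j, if j ∈ S then z j ^ 2 - lam else 0) + lam * (∑ j, t j) := by
      have heq : (∑ j, t j * z j ^ 2)
          = (∑ j, t j * (z j ^ 2 - lam)) + lam * (∑ j, t j) := by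
        rw [Finset.mul_sum, ← Finset.sum_add_distrib]
        exact Finset.sum_congr rfl (fun j _ => by ring)
      rw [heq]
      gcongr with j _
      by_cases h : j ∈ S
      · simp only [h, if_true]
        have h1 := hge j h
        have := ht0' j; have := ht1' j
        nlinarith
      · simp only [h, if_false]
        have h1 := hle j h
        have := ht0' j
        nlinarith
    have step3 : (∑ j, if j ∈ S then z j ^ 2 - lam else 0)
        = (∑ j ∈ S, z j ^ 2) - lam * k := by
      rw [Finset.sum_ite_mem, Finset.univ_inter, Finset.sum_sub_distrib,
        Finset.sum_const, hcard, nsmul_eq_mul]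
      ring
    have step4 : lam * (∑ j, t j) ≤ lam * k :=
      mul_le_mul_of_nonneg_left htk hlam0
    linarith
  · -- penalized optimality
    intro t ht
    obtain ⟨ht0, ht1⟩ := ht
    have ht0' : ∀ j, 0 ≤ t j := fun j => ht0 j
    have ht1' : ∀ j, t j ≤ 1 := fun j => ht1 j
    rw [key, keyt]
    have lhs_eq : -(∑ j ∈ S, z j ^ 2) + lam * (k : ℝ)
        = ∑ j, (if j ∈ S then lam - z j ^ 2 else 0) := by
      rw [Finset.sum_ite_mem, Finset.univ_inter, Finset.sum_sub_distrib,
        Finset.sum_const, hcard, nsmul_eq_mul]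
      ring
    have rhs_eq : -(∑ j, t j ^ 2 * z j ^ 2) + lam * (∑ j, t j)
        = ∑ j, (-(t j ^ 2 * z j ^ 2) + lam * t j) := by
      rw [Finset.mul_sum, ← Finset.sum_neg_distrib, ← Finset.sum_add_distrib]
    rw [lhs_eq, rhs_eq]
    apply Finset.sum_le_sum
    intro j _
    have h0 := ht0' j; have h1 := ht1' j; have hwj := sq_nonneg (z j)
    by_cases h : j ∈ S
    · simp only [h, if_true]
      have hg := hge j h
      nlinarith [mul_nonneg (sub_nonneg.2 h1) (sub_nonneg.2 hg),
        mul_nonneg (mul_nonneg h0 (sub_nonneg.2 h1)) hwj]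
    · simp only [h, if_false]
      have hl := hle j h
      nlinarith [mul_nonneg h0 (sub_nonneg.2 hl),
        mul_nonneg (mul_nonneg h0 hwj) (sub_nonneg.2 h1)]
end

section
/- Fix z ∈ ℝ^p and k ∈ {1,…,p}. The maximum of Σ_{j=1}^p t_j² z_j² over t ∈ [0,1]^p subject to Σ_j t_j ≤ k equals the sum of the k largest values among z_1², …, z_p², and it is attained at the binary vector s that equals 1 exactly at indices of k largest |z_j| values. -/
/-!
Since `t² ≤ t` on `[0,1]`, it suffices to bound the linear objective `∑ tⱼ wⱼ` with `wⱼ = zⱼ²`.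
With the threshold `m = min_{i ∈ A} wᵢ`, every term of `∑ tⱼ (wⱼ - m)` is at most the
corresponding term of `∑_{j ∈ A} (wⱼ - m)`, and the remaining `m ∑ tⱼ` is at most `m k`.
-/

open BigOperators Finset

section LinearBound

variable {ι : Type*} [Fintype ι] {t w : ι → ℝ} {A : Finset ι}

theorem sum_mul_le_sum_of_threshold {m : ℝ} (ht0 : 0 ≤ t) (ht1 : t ≤ 1)
    (hsum : ∑ j, t j ≤ #A) (hm : 0 ≤ m) (hA : ∀ i ∈ A, m ≤ w i) (hAc : ∀ j ∉ A, w j ≤ m) :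
    ∑ j, t j * w j ≤ ∑ j ∈ A, w j := by
  classical
  have hexcess : ∑ j, t j * (w j - m) ≤ ∑ j ∈ A, (w j - m) := by
    rw [← sum_filter_add_sum_filter_not univ (· ∈ A)]
    simp only [filter_mem_eq_inter, univ_inter]
    have hin : ∑ j ∈ A, t j * (w j - m) ≤ ∑ j ∈ A, (w j - m) :=
      sum_le_sum fun j hj => mul_le_of_le_one_left (sub_nonneg.2 (hA j hj)) (ht1 j)
    have hout : ∑ j ∈ univ.filter (· ∉ A), t j * (w j - m) ≤ 0 :=
      sum_nonpos fun j hj =>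
        mul_nonpos_of_nonneg_of_nonpos (ht0 j) (sub_nonpos.2 (hAc j (mem_filter.1 hj).2))
    linarith
  simp only [mul_sub, sum_sub_distrib, ← sum_mul, sum_const, nsmul_eq_mul] at hexcess
  linarith [mul_le_mul_of_nonneg_left hsum hm]

theorem sum_mul_le_sum_of_forall_le (hA : A.Nonempty) (hw : 0 ≤ w)
    (htop : ∀ i ∈ A, ∀ j ∉ A, w j ≤ w i) (ht0 : 0 ≤ t) (ht1 : t ≤ 1)
    (hsum : ∑ j, t j ≤ #A) :
    ∑ j, t j * w j ≤ ∑ j ∈ A, w j := by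
  obtain ⟨i₀, hi₀, hmin⟩ := A.exists_mem_eq_inf' hA w
  refine sum_mul_le_sum_of_threshold (m := w i₀) ht0 ht1 hsum (hw i₀)
    (fun i hi => ?_) fun j hj => ?_
  · rw [← hmin]
    exact inf'_le w hi
  · exact htop i₀ hi₀ j hj

end LinearBound

theorem stmt17_general {p : ℕ} (z : Fin p → ℝ) (k : ℕ) (hk1 : 1 ≤ k)
    (A : Finset (Fin p)) (hA : A.card = k)
    (htop : ∀ i ∈ A, ∀ j, j ∉ A → z j ^ 2 ≤ z i ^ 2) :
    IsGreatest {x : ℝ | ∃ t : Fin p → ℝ, t ∈ Set.Icc (0 : Fin p → ℝ) 1 ∧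
        (∑ j, t j) ≤ k ∧ x = ∑ j, t j ^ 2 * z j ^ 2} (∑ j ∈ A, z j ^ 2) ∧
    (∑ j, (if j ∈ A then (1 : ℝ) else 0) ^ 2 * z j ^ 2 = ∑ j ∈ A, z j ^ 2) := by
  have hattain : ∑ j, (if j ∈ A then (1 : ℝ) else 0) ^ 2 * z j ^ 2 = ∑ j ∈ A, z j ^ 2 := by
    simp [ite_pow, ite_mul, sum_ite_mem]
  have hfeasible : (fun j => if j ∈ A then (1 : ℝ) else 0) ∈ Set.Icc (0 : Fin p → ℝ) 1 :=
    ⟨fun j => by dsimp; split_ifs <;> norm_num, fun j => by dsimp; split_ifs <;> norm_num⟩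
  refine ⟨⟨⟨_, hfeasible, by simp [sum_ite_mem, hA], hattain.symm⟩, ?_⟩, hattain⟩
  rintro x ⟨t, ⟨ht0, ht1⟩, hsum, rfl⟩
  have hA_ne : A.Nonempty := card_pos.1 (by omega)
  calc ∑ j, t j ^ 2 * z j ^ 2 ≤ ∑ j, t j * z j ^ 2 :=
        sum_le_sum fun j _ =>
          mul_le_mul_of_nonneg_right (pow_le_of_le_one (ht0 j) (ht1 j) two_ne_zero) (sq_nonneg _)
    _ ≤ ∑ j ∈ A, z j ^ 2 :=
        sum_mul_le_sum_of_forall_le hA_ne (fun j => sq_nonneg (z j)) htop ht0 ht1 (by rwa [hA])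

/-- The maximum of `∑ t_j² z_j²` over `t ∈ [0,1]^p` with `∑ t_j ≤ k` equals the sum of
the `k` largest values among `z_j²`, attained at the binary indicator of a set of `k`
indices with largest `z_j²`. -/
theorem stmt17 {p : ℕ} (z : Fin p → ℝ) (k : ℕ) (hk1 : 1 ≤ k) (hkp : k ≤ p)
    (A : Finset (Fin p)) (hA : A.card = k)
    (htop : ∀ i ∈ A, ∀ j, j ∉ A → z j ^ 2 ≤ z i ^ 2) :
    IsGreatest {x : ℝ | ∃ t : Fin p → ℝ, t ∈ Set.Icc (0 : Fin p → ℝ) 1 ∧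
        (∑ j, t j) ≤ k ∧ x = ∑ j, t j ^ 2 * z j ^ 2} (∑ j ∈ A, z j ^ 2) ∧
    (∑ j, (if j ∈ A then (1 : ℝ) else 0) ^ 2 * z j ^ 2 = ∑ j ∈ A, z j ^ 2) :=
  stmt17_general z k hk1 A hA htop
end
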